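/- Suppose β_i = 0 for all i ∈ {1,…,n}, E[z_j] = 0 for all j ∈ {1,…,m} under D, and Var[x_i(z)] > 0 for all i. Then the mean squared error of the ERL estimator is bounded by E[(τ̂ − τ)²] ≤ (4/n²) [ Σ_{i=1}^n μ_i² (1/Var[x_i] − 1) + 2 Σ_{1≤i<j≤n} μ_i μ_j ( E[(x_i x_j)²] / (Var[x_i] Var[x_j]) − 1 ) ]. -/

import Mathlib

open Finset Matrix

/-- The sign map from Booleans to `{-1, 1} ⊆ ℝ`. -/
def sgn (b : Bool) : ℝ := if b then 1 else -1

/-- Expectation of `f` under the (finitely supported) design `D`. -/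
noncomputable def pexp {α : Type*} [Fintype α] (D f : α → ℝ) : ℝ :=
  ∑ ω, D ω * f ω

/-- Variance of `f` under the design `D`. -/
noncomputable def pvar {α : Type*} [Fintype α] (D f : α → ℝ) : ℝ :=
  pexp D (fun ω => (f ω - pexp D f) ^ 2)

/-- Covariance of `f` and `g` under the design `D`. -/
noncomputable def pcov {α : Type*} [Fintype α] (D f g : α → ℝ) : ℝ :=
  pexp D (fun ω => (f ω - pexp D f) * (g ω - pexp D g))

/-!
Since the design is mean-zero in every coordinate, every exposure `xᵢ` is mean-zero, so
`Var[xᵢ] = E[xᵢ²]`, and with zero intercepts `τ = (2/n) ∑ μᵢ` because `xᵢ(±𝟏) = ±1`. Hence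
`τ̂ - τ = (2/n) ∑ μᵢ (xᵢ² / Var[xᵢ] - 1)`, whose second moment expands to
`(4/n²) ∑ᵢ ∑ⱼ μᵢ μⱼ (E[xᵢ² xⱼ²] / (Var[xᵢ] Var[xⱼ]) - 1)`. This double sum is symmetric, and the
only inequality is on the diagonal: `|xᵢ| ≤ 1` gives `E[xᵢ⁴] ≤ E[xᵢ²] = Var[xᵢ]`.
-/

section Expectation

variable {α : Type*} [Fintype α] {D : α → ℝ}

lemma pexp_add (f g : α → ℝ) : pexp D (fun ω => f ω + g ω) = pexp D f + pexp D g := by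
  simp only [pexp, mul_add, sum_add_distrib]

lemma pexp_const_mul (c : ℝ) (f : α → ℝ) : pexp D (fun ω => c * f ω) = c * pexp D f := by
  simp only [pexp, mul_sum, mul_left_comm]

lemma pexp_const (hD1 : ∑ ω, D ω = 1) (c : ℝ) : pexp D (fun _ => c) = c := by
  simp only [pexp, ← sum_mul, hD1, one_mul]

lemma pexp_sum {ι : Type*} (s : Finset ι) (f : ι → α → ℝ) :
    pexp D (fun ω => ∑ i ∈ s, f i ω) = ∑ i ∈ s, pexp D (f i) := by
  simp only [pexp, mul_sum]
  exact sum_comm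

lemma pexp_mono (hD0 : ∀ ω, 0 ≤ D ω) {f g : α → ℝ} (h : ∀ ω, f ω ≤ g ω) :
    pexp D f ≤ pexp D g :=
  sum_le_sum fun ω _ => mul_le_mul_of_nonneg_left (h ω) (hD0 ω)

lemma pvar_eq_pexp_sq_of_pexp_eq_zero {f : α → ℝ} (hf : pexp D f = 0) :
    pvar D f = pexp D (fun ω => f ω ^ 2) := by
  simp only [pvar, hf, sub_zero]

lemma pexp_sum_mul_sq {ι : Type*} [Fintype ι] (a : ι → ℝ) (g : ι → α → ℝ) :
    pexp D (fun ω => (∑ i, a i * g i ω) ^ 2)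
      = ∑ i, ∑ j, a i * a j * pexp D (fun ω => g i ω * g j ω) := by
  simp_rw [sq, sum_mul_sum, pexp_sum, ← pexp_const_mul]
  exact sum_congr rfl fun i _ => sum_congr rfl fun j _ => congrArg _ (funext fun ω => by ring)

lemma pexp_sq_div_sub_one_mul (hD1 : ∑ ω, D ω = 1) {f g : α → ℝ} {a b : ℝ}
    (ha : pexp D (fun ω => f ω ^ 2) = a) (hb : pexp D (fun ω => g ω ^ 2) = b)
    (ha0 : a ≠ 0) (hb0 : b ≠ 0) :
    pexp D (fun ω => (f ω ^ 2 / a - 1) * (g ω ^ 2 / b - 1))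
      = pexp D (fun ω => (f ω * g ω) ^ 2) / (a * b) - 1 := by
  have hexpand : (fun ω => (f ω ^ 2 / a - 1) * (g ω ^ 2 / b - 1)) = fun ω =>
      (a * b)⁻¹ * (f ω * g ω) ^ 2 + (-a⁻¹ * f ω ^ 2 + (-b⁻¹ * g ω ^ 2 + 1)) := by
    funext ω
    field_simp
    ring
  rw [hexpand, pexp_add, pexp_add, pexp_add, pexp_const_mul, pexp_const_mul, pexp_const_mul,
    pexp_const hD1, ha, hb]
  field_simp
  ring

lemma pexp_sq_mul_self_div_le (hD0 : ∀ ω, 0 ≤ D ω) {f : α → ℝ} (hf : ∀ ω, |f ω| ≤ 1) {a : ℝ}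
    (ha : pexp D (fun ω => f ω ^ 2) = a) (ha0 : 0 < a) :
    pexp D (fun ω => (f ω * f ω) ^ 2) / (a * a) ≤ 1 / a := by
  have hle : pexp D (fun ω => (f ω * f ω) ^ 2) ≤ a := by
    rw [← ha]
    refine pexp_mono hD0 fun ω => ?_
    have hsq : f ω ^ 2 ≤ 1 := (sq_le_one_iff_abs_le_one _).mpr (hf ω)
    nlinarith [sq_nonneg (f ω)]
  rw [div_le_div_iff₀ (by positivity) ha0]
  nlinarith

end Expectation

lemma abs_sum_mul_sgn_le_one {ι : Type*} [Fintype ι] {w : ι → ℝ} (hw0 : ∀ j, 0 ≤ w j)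
    (hw1 : ∑ j, w j = 1) (ω : ι → Bool) : |∑ j, w j * sgn (ω j)| ≤ 1 := by
  calc |∑ j, w j * sgn (ω j)| ≤ ∑ j, |w j * sgn (ω j)| := abs_sum_le_sum_abs _ _
    _ = ∑ j, w j := sum_congr rfl fun j _ => by
        rw [abs_mul, abs_of_nonneg (hw0 j)]
        cases ω j <;> simp [sgn]
    _ = 1 := hw1

lemma sum_sum_eq_sum_diag_add_two_mul_sum_Ioi {ι R : Type*} [Fintype ι] [LinearOrder ι]
    [LocallyFiniteOrderTop ι] [LocallyFiniteOrderBot ι] [CommSemiring R]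
    (f : ι → ι → R) (hf : ∀ i j, f i j = f j i) :
    ∑ i, ∑ j, f i j = ∑ i, f i i + 2 * ∑ i, ∑ j ∈ Ioi i, f i j := by
  have hrow : ∀ i, ∑ j, f i j = f i i + (∑ j ∈ Ioi i, f i j + ∑ j ∈ Iio i, f i j) := fun i => by
    rw [Fintype.sum_eq_add_sum_compl i, ← Ioi_disjUnion_Iio, sum_disjUnion]
  have hlower : ∑ i, ∑ j ∈ Iio i, f i j = ∑ i, ∑ j ∈ Ioi i, f i j := by
    rw [sum_comm' (t' := univ) (s' := fun j => Ioi j) (by simp)]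
    exact sum_congr rfl fun j _ => sum_congr rfl fun i _ => hf i j
  simp only [hrow, sum_add_distrib, hlower]
  ring

theorem erl_mse_bound_zero_intercepts_general
    (n m : ℕ)
    (W : Matrix (Fin n) (Fin m) ℝ)
    (hWnn : ∀ i j, 0 ≤ W i j)
    (hWrow : ∀ i, ∑ j, W i j = 1)
    (D : (Fin m → Bool) → ℝ) (hD0 : ∀ ω, 0 ≤ D ω) (hD1 : ∑ ω, D ω = 1)
    (hz : ∀ j : Fin m, pexp D (fun ω => sgn (ω j)) = 0)
    (μ β : Fin n → ℝ)
    (hβ : ∀ i, β i = 0)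
    (x : Fin n → (Fin m → Bool) → ℝ)
    (hx : ∀ i ω, x i ω = ∑ j, W i j * sgn (ω j))
    (Y : Fin n → (Fin m → Bool) → ℝ)
    (hY : ∀ i ω, Y i ω = μ i * x i ω + β i)
    (hvar : ∀ i, 0 < pvar D (x i))
    (τhat : (Fin m → Bool) → ℝ)
    (hτhat : ∀ ω, τhat ω = (2 / n : ℝ) *
      ∑ i, Y i ω * ((x i ω - pexp D (x i)) / pvar D (x i)))
    (τ : ℝ)
    (hτ : τ = (1 / n : ℝ) * ∑ i, (Y i (fun _ => true) - Y i (fun _ => false))) :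
    pexp D (fun ω => (τhat ω - τ) ^ 2)
      ≤ (4 / (n : ℝ) ^ 2) *
        (∑ i, μ i ^ 2 * (1 / pvar D (x i) - 1)
          + 2 * ∑ i, ∑ j ∈ Finset.Ioi i,
              μ i * μ j *
                (pexp D (fun ω => (x i ω * x j ω) ^ 2)
                  / (pvar D (x i) * pvar D (x j)) - 1)) := by
  have hx_mean : ∀ i, pexp D (x i) = 0 := fun i => by
    simp only [funext (hx i), pexp_sum, pexp_const_mul, hz, mul_zero, sum_const_zero]
  have hx_sq : ∀ i, pexp D (fun ω => x i ω ^ 2) = pvar D (x i) := fun i =>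
    (pvar_eq_pexp_sq_of_pexp_eq_zero (hx_mean i)).symm
  have hx_abs : ∀ i ω, |x i ω| ≤ 1 := fun i ω =>
    hx i ω ▸ abs_sum_mul_sgn_le_one (hWnn i) (hWrow i) ω
  have hτ_eq : τ = (2 / n : ℝ) * ∑ i, μ i := by
    have hx_const : ∀ i b, x i (fun _ => b) = sgn b := fun i b => by
      rw [hx, ← sum_mul, hWrow, one_mul]
    simp only [hτ, hY, hβ, hx_const, sgn, mul_sum]
    exact sum_congr rfl fun i _ => by norm_num; ring
  have herr : ∀ ω, τhat ω - τ = (2 / n : ℝ) * ∑ i, μ i * (x i ω ^ 2 / pvar D (x i) - 1) := by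
    intro ω
    rw [hτhat, hτ_eq, ← mul_sub, ← sum_sub_distrib]
    simp only [hY, hβ, hx_mean, add_zero, sub_zero]
    exact congrArg _ (sum_congr rfl fun i _ => by ring)
  set c : Fin n → Fin n → ℝ := fun i j =>
    pexp D (fun ω => (x i ω * x j ω) ^ 2) / (pvar D (x i) * pvar D (x j)) - 1
  have hc : ∀ i j,
      pexp D (fun ω => (x i ω ^ 2 / pvar D (x i) - 1) * (x j ω ^ 2 / pvar D (x j) - 1)) = c i j :=
    fun i j =>
    pexp_sq_div_sub_one_mul hD1 (hx_sq i) (hx_sq j) (hvar i).ne' (hvar j).ne'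
  have hc_diag : ∀ i, c i i ≤ 1 / pvar D (x i) - 1 := fun i =>
    sub_le_sub_right (pexp_sq_mul_self_div_le hD0 (hx_abs i) (hx_sq i) (hvar i)) 1
  calc pexp D (fun ω => (τhat ω - τ) ^ 2)
      = (4 / (n : ℝ) ^ 2) * ∑ i, ∑ j, μ i * μ j * c i j := by
        simp only [herr, mul_pow, pexp_const_mul, pexp_sum_mul_sq, hc]
        ring
    _ = (4 / (n : ℝ) ^ 2) * (∑ i, μ i ^ 2 * c i i + 2 * ∑ i, ∑ j ∈ Ioi i, μ i * μ j * c i j) := by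
        rw [sum_sum_eq_sum_diag_add_two_mul_sum_Ioi _ fun i j => by
          simp only [c, mul_comm (μ i), mul_comm (x i _), mul_comm (pvar D (x i))]]
        simp only [sq]
    _ ≤ _ := by gcongr with i; exact hc_diag i

/-- MSE bound for the ERL estimator when all intercepts vanish and each
treatment assignment is mean-zero (`E[z_j] = 0` for all `j`). -/
theorem erl_mse_bound_zero_intercepts
    (n m : ℕ) (hn : 0 < n) (hm : 0 < m)
    (W : Matrix (Fin n) (Fin m) ℝ)
    (hWnn : ∀ i j, 0 ≤ W i j)
    (hWrow : ∀ i, ∑ j, W i j = 1)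
    (D : (Fin m → Bool) → ℝ) (hD0 : ∀ ω, 0 ≤ D ω) (hD1 : ∑ ω, D ω = 1)
    (hz : ∀ j : Fin m, pexp D (fun ω => sgn (ω j)) = 0)
    (μ β : Fin n → ℝ)
    (hβ : ∀ i, β i = 0)
    (x : Fin n → (Fin m → Bool) → ℝ)
    (hx : ∀ i ω, x i ω = ∑ j, W i j * sgn (ω j))
    (Y : Fin n → (Fin m → Bool) → ℝ)
    (hY : ∀ i ω, Y i ω = μ i * x i ω + β i)
    (hvar : ∀ i, 0 < pvar D (x i))
    (τhat : (Fin m → Bool) → ℝ)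
    (hτhat : ∀ ω, τhat ω = (2 / n : ℝ) *
      ∑ i, Y i ω * ((x i ω - pexp D (x i)) / pvar D (x i)))
    (τ : ℝ)
    (hτ : τ = (1 / n : ℝ) * ∑ i, (Y i (fun _ => true) - Y i (fun _ => false))) :
    pexp D (fun ω => (τhat ω - τ) ^ 2)
      ≤ (4 / (n : ℝ) ^ 2) *
        (∑ i, μ i ^ 2 * (1 / pvar D (x i) - 1)
          + 2 * ∑ i, ∑ j ∈ Finset.Ioi i,
              μ i * μ j *
                (pexp D (fun ω => (x i ω * x j ω) ^ 2)
                  / (pvar D (x i) * pvar D (x j)) - 1)) :=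
  erl_mse_bound_zero_intercepts_general n m W hWnn hWrow D hD0 hD1 hz μ β hβ x hx Y hY hvar τhat
    hτhat τ hτ
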